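/- Let G be a connected Lie group and K a compact subgroup such that there exists a continuous involution τ: G → G with τ(x) ∈ Kx⁻¹K for all x ∈ G. Then the convolution algebra L¹(G/K)^K of K-bi-invariant integrable functions is commutative (i.e., (G,K) is a Gelfand pair). -/

import Mathlib

/-!
The involution `τ` is a continuous automorphism, so it maps the Haar measure `μ` to `c • μ`, and
`τ² = 1` forces `c = 1`. Uniqueness of Haar measure is only available on sets with compact
closure; it extends to all measurable sets because a connected locally compact group is
σ-compact. For `K`-bi-invariant `f`, the condition `τ x ∈ K x⁻¹ K` gives `f ∘ τ = f ∘ inv`.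
As `f ⋆ g` is again bi-invariant,
`(f ⋆ g)(x⁻¹) = (f ⋆ g)(τ x) = (f ∘ τ ⋆ g ∘ τ)(x) = (f ∘ inv ⋆ g ∘ inv)(x) = (g ⋆ f)(x⁻¹)`.
-/

open MeasureTheory Pointwise
open scoped ENNReal

section SigmaCompact

variable {G : Type*} [Group G]

theorem Subgroup.exists_mem_pow_of_mem_closure {S : Set G} (hS : S⁻¹ = S) {x : G}
    (hx : x ∈ Subgroup.closure S) : ∃ n : ℕ, x ∈ S ^ n := by
  induction hx using Subgroup.closure_induction with
  | mem x hx => exact ⟨1, by rwa [pow_one]⟩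
  | one => exact ⟨0, by rw [pow_zero]; rfl⟩
  | mul x y _ _ hx hy =>
    obtain ⟨n, hn⟩ := hx
    obtain ⟨m, hm⟩ := hy
    exact ⟨n + m, pow_add S n m ▸ Set.mul_mem_mul hn hm⟩
  | inv x _ hx =>
    obtain ⟨n, hn⟩ := hx
    exact ⟨n, by rwa [← hS, inv_pow, Set.inv_mem_inv]⟩

variable [TopologicalSpace G] [IsTopologicalGroup G]

theorem IsTopologicalGroup.sigmaCompactSpace_of_connectedSpace [WeaklyLocallyCompactSpace G]
    [ConnectedSpace G] : SigmaCompactSpace G := by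
  obtain ⟨V, hVc, hV1⟩ := exists_compact_mem_nhds (1 : G)
  set S := V ∪ V⁻¹
  have hS : S⁻¹ = S := by rw [Set.union_inv, inv_inv, Set.union_comm]
  have hSc : ∀ n : ℕ, IsCompact (S ^ n) := by
    intro n
    induction n with
    | zero => simp
    | succ n ih => rw [pow_succ]; exact ih.mul (hVc.union hVc.inv)
  have hopen : IsOpen (Subgroup.closure S : Set G) := Subgroup.isOpen_of_mem_nhds _
    (Filter.mem_of_superset hV1 (Set.subset_union_left.trans Subgroup.subset_closure))
  have htop : Subgroup.closure S = ⊤ := Subgroup.coe_eq_univ.mp <|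
    IsClopen.eq_univ ⟨Subgroup.isClosed_of_isOpen _ hopen, hopen⟩ ⟨1, Subgroup.one_mem _⟩
  refine ⟨⟨fun n => S ^ n, hSc, Set.eq_univ_of_forall fun x => ?_⟩⟩
  exact Set.mem_iUnion.mpr (Subgroup.exists_mem_pow_of_mem_closure hS (htop ▸ Subgroup.mem_top x))

end SigmaCompact

namespace MeasureTheory.Measure

theorem ext_of_isCompact_closure {X : Type*} [TopologicalSpace X] [R1Space X]
    [SigmaCompactSpace X] [MeasurableSpace X] {μ ν : Measure X}
    (h : ∀ s, IsCompact (closure s) → μ s = ν s) : μ = ν := by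
  ext s -
  have hcover : s = ⋃ n, s ∩ compactCovering X n := by
    rw [← Set.inter_iUnion, iUnion_compactCovering, Set.inter_univ]
  have hmono : Monotone fun n => s ∩ compactCovering X n := fun _ _ hmn =>
    Set.inter_subset_inter_right _ (compactCovering_subset X hmn)
  rw [hcover, hmono.measure_iUnion, hmono.measure_iUnion]
  exact iSup_congr fun n =>
    h _ ((isCompact_compactCovering X n).closure_of_subset Set.inter_subset_right)

variable {G : Type*} [Group G] [TopologicalSpace G] [IsTopologicalGroup G]
  [MeasurableSpace G] [BorelSpace G] [LocallyCompactSpace G] [SigmaCompactSpace G]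

theorem isMulLeftInvariant_eq_smul_of_sigmaCompactSpace (μ' μ : Measure G) [IsHaarMeasure μ]
    [IsFiniteMeasureOnCompacts μ'] [IsMulLeftInvariant μ'] :
    μ' = haarScalarFactor μ' μ • μ :=
  ext_of_isCompact_closure fun _ hs =>
    measure_isMulInvariant_eq_smul_of_isCompact_closure μ' μ hs

theorem map_eq_self_of_involutive (μ : Measure G) [IsHaarMeasure μ] (τ : G ≃ₜ* G)
    (hτ : Function.Involutive τ) : μ.map τ = μ := by
  have hτm : Measurable τ := τ.continuous.measurable
  let c : ℝ≥0∞ := haarScalarFactor (μ.map τ) μ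
  have hc : μ.map τ = c • μ := isMulLeftInvariant_eq_smul_of_sigmaCompactSpace _ μ
  have hc2 : c ^ 2 • μ = μ := by
    calc c ^ 2 • μ = (μ.map τ).map τ := by rw [hc, Measure.map_smul, hc, smul_smul, pow_two]
      _ = μ := by rw [Measure.map_map hτm hτm, hτ.comp_self, Measure.map_id]
  obtain ⟨V, hVc, hV1⟩ := exists_compact_mem_nhds (1 : G)
  have hc1 : c = 1 := by
    have hV : c ^ 2 * μ V = 1 ^ 2 * μ V := by
      rw [one_pow, one_mul]
      exact congrArg (· V) hc2
    exact (ENNReal.pow_right_strictMono two_ne_zero).injective <|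
      (ENNReal.mul_left_inj (measure_pos_of_mem_nhds μ hV1).ne' hVc.measure_lt_top.ne).mp hV
  rw [hc, hc1, one_smul]

end MeasureTheory.Measure

def IsBiInvariant {G α : Type*} [Group G] (K : Subgroup G) (f : G → α) : Prop :=
  ∀ k₁ ∈ K, ∀ k₂ ∈ K, ∀ x, f (k₁ * x * k₂) = f x

theorem IsBiInvariant.comp_eq_comp_inv {G α : Type*} [Group G] {K : Subgroup G} {f : G → α}
    (hf : IsBiInvariant K f) {τ : G → G}
    (hτK : ∀ x : G, ∃ k₁ ∈ K, ∃ k₂ ∈ K, τ x = k₁ * x⁻¹ * k₂) : f ∘ τ = f ∘ Inv.inv := by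
  funext x
  obtain ⟨k₁, hk₁, k₂, hk₂, hx⟩ := hτK x
  simp only [Function.comp_apply, hx, hf k₁ hk₁ k₂ hk₂]

section Convolution

variable {G : Type*} [Group G] [MeasurableSpace G]

noncomputable def mconvolution (f g : G → ℂ) (μ : Measure G) (x : G) : ℂ :=
  ∫ y, f y * g (y⁻¹ * x) ∂μ

variable (μ : Measure G) {f g : G → ℂ}

theorem mconvolution_mul_right {k : G} (hg : ∀ y, g (y * k) = g y) (x : G) :
    mconvolution f g μ (x * k) = mconvolution f g μ x := by
  simp only [mconvolution, ← mul_assoc, hg]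

variable [MeasurableMul G] [μ.IsMulLeftInvariant]

theorem mconvolution_mul_left {k : G} (hf : ∀ y, f (k * y) = f y) (x : G) :
    mconvolution f g μ (k * x) = mconvolution f g μ x := by
  rw [mconvolution, ← integral_mul_left_eq_self _ k]
  simp only [hf, mul_inv_rev, mul_assoc, inv_mul_cancel_left, mconvolution]

theorem IsBiInvariant.mconvolution {K : Subgroup G} (hf : IsBiInvariant K f)
    (hg : IsBiInvariant K g) : IsBiInvariant K (mconvolution f g μ) := by
  intro k₁ hk₁ k₂ hk₂ x
  rw [mconvolution_mul_right μ (fun y => by simpa using hg 1 K.one_mem k₂ hk₂ y),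
    mconvolution_mul_left μ (fun y => by simpa using hf k₁ hk₁ 1 K.one_mem y)]

theorem mconvolution_comp_inv (x : G) :
    mconvolution (f ∘ Inv.inv) (g ∘ Inv.inv) μ x = mconvolution g f μ x⁻¹ := by
  rw [mconvolution, ← integral_mul_left_eq_self _ x, mconvolution]
  congr 1 with y
  simp only [Function.comp_apply, mul_inv_rev, inv_inv, inv_mul_cancel_left, mul_comm]

end Convolution

section Involution

variable {G : Type*} [Group G] [TopologicalSpace G] [MeasurableSpace G] [BorelSpace G]
  (μ : Measure G) {f g : G → ℂ}

theorem mconvolution_comp_of_measurePreserving {τ : G ≃ₜ* G} (hτ : MeasurePreserving τ μ μ)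
    (x : G) : mconvolution (f ∘ τ) (g ∘ τ) μ x = mconvolution f g μ (τ x) := by
  simp only [mconvolution, Function.comp_apply, map_mul, map_inv]
  exact hτ.integral_comp τ.toHomeomorph.measurableEmbedding fun y => f y * g (y⁻¹ * τ x)

theorem mconvolution_comm_of_isBiInvariant [MeasurableMul G] [μ.IsMulLeftInvariant] {K : Subgroup G} {τ : G ≃ₜ* G}
    (hτ : MeasurePreserving τ μ μ) (hτK : ∀ x : G, ∃ k₁ ∈ K, ∃ k₂ ∈ K, τ x = k₁ * x⁻¹ * k₂)
    (hf : IsBiInvariant K f) (hg : IsBiInvariant K g) :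
    mconvolution f g μ = mconvolution g f μ := by
  funext x
  calc mconvolution f g μ x = mconvolution f g μ (τ x⁻¹) := by
        simpa only [Function.comp_apply, inv_inv] using
          (congrFun ((hf.mconvolution μ hg).comp_eq_comp_inv hτK) x⁻¹).symm
    _ = mconvolution (f ∘ τ) (g ∘ τ) μ x⁻¹ := (mconvolution_comp_of_measurePreserving μ hτ _).symm
    _ = mconvolution (f ∘ Inv.inv) (g ∘ Inv.inv) μ x⁻¹ := by
        rw [hf.comp_eq_comp_inv hτK, hg.comp_eq_comp_inv hτK]
    _ = mconvolution g f μ x := by rw [mconvolution_comp_inv, inv_inv]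

end Involution

theorem gelfand_pair_of_involution_general
    {G : Type*} [Group G] [TopologicalSpace G] [IsTopologicalGroup G]
    [MeasurableSpace G] [BorelSpace G] [LocallyCompactSpace G] [ConnectedSpace G]
    (μ : Measure G) [μ.IsHaarMeasure]
    (K : Subgroup G)
    (τ : G → G) (hτc : Continuous τ) (hτ2 : ∀ x, τ (τ x) = x)
    (hτhom : ∀ x y, τ (x * y) = τ x * τ y)
    (hτK : ∀ x : G, ∃ k₁ ∈ K, ∃ k₂ ∈ K, τ x = k₁ * x⁻¹ * k₂) :
    ∀ f g : G → ℂ, Integrable f μ → Integrable g μ →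
      (∀ k₁ ∈ K, ∀ k₂ ∈ K, ∀ x, f (k₁ * x * k₂) = f x) →
      (∀ k₁ ∈ K, ∀ k₂ ∈ K, ∀ x, g (k₁ * x * k₂) = g x) →
      (fun x => ∫ y, f y * g (y⁻¹ * x) ∂μ) =ᵐ[μ]
        fun x => ∫ y, g y * f (y⁻¹ * x) ∂μ := by
  intro f g _ _ hf hg
  have : SigmaCompactSpace G := IsTopologicalGroup.sigmaCompactSpace_of_connectedSpace
  let τ' : G ≃ₜ* G :=
    { toFun := τ, invFun := τ, left_inv := hτ2, right_inv := hτ2, map_mul' := hτhom,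
      continuous_toFun := hτc, continuous_invFun := hτc }
  have hτμ : MeasurePreserving τ' μ μ :=
    ⟨τ'.continuous.measurable, μ.map_eq_self_of_involutive τ' hτ2⟩
  exact .of_eq (mconvolution_comm_of_isBiInvariant μ hτμ hτK hf hg)

/-- If there is a continuous involutive automorphism `τ` of the connected group `G`
with `τ(x) ∈ K x⁻¹ K` for all `x`, then the convolution algebra of `K`-bi-invariant
integrable functions is commutative, i.e. `(G,K)` is a Gelfand pair. -/
theorem gelfand_pair_of_involution
    {G : Type*} [Group G] [TopologicalSpace G] [IsTopologicalGroup G]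
    [MeasurableSpace G] [BorelSpace G] [LocallyCompactSpace G] [ConnectedSpace G]
    (μ : Measure G) [μ.IsHaarMeasure]
    (K : Subgroup G) (hK : IsCompact (K : Set G))
    (τ : G → G) (hτc : Continuous τ) (hτ2 : ∀ x, τ (τ x) = x)
    (hτhom : ∀ x y, τ (x * y) = τ x * τ y)
    (hτK : ∀ x : G, ∃ k₁ ∈ K, ∃ k₂ ∈ K, τ x = k₁ * x⁻¹ * k₂) :
    ∀ f g : G → ℂ, Integrable f μ → Integrable g μ →
      (∀ k₁ ∈ K, ∀ k₂ ∈ K, ∀ x, f (k₁ * x * k₂) = f x) →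
      (∀ k₁ ∈ K, ∀ k₂ ∈ K, ∀ x, g (k₁ * x * k₂) = g x) →
      (fun x => ∫ y, f y * g (y⁻¹ * x) ∂μ) =ᵐ[μ]
        fun x => ∫ y, g y * f (y⁻¹ * x) ∂μ :=
  gelfand_pair_of_involution_general μ K τ hτc hτ2 hτhom hτK
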